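/- Let n ≥ 4 be an integer, m > 0 a real number, and λ a real number with 4λ + (n−2)(n−4) ≥ 0. Define u(r) = r^(−(n−2)/2)·(2r^(n-2)/(m + 2r^(n-2)))^(1/(n-2)). Then for every r > 0, u''(r) + ((n−2)/r)·u'(r) + ( V(r) − λ/r² )·u(r) ≤ 0, where V(r) = (m(n-1)/(2r^n))·(2r^(n-2)/(m + 2r^(n-2)))². -/
import Mathlib


open Real

/-- The radial function `v(r) = (2 r^(n-2) / (m + 2 r^(n-2)))^(1/(n-2))`. -/
noncomputable def schwarzV (n : ℕ) (m : ℝ) : ℝ → ℝ :=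
  fun r => (2 * r ^ (n - 2) / (m + 2 * r ^ (n - 2))) ^ ((1 : ℝ) / ((n : ℝ) - 2))

/-- The conjugated radial supersolution `u(r) = r^(-(n-2)/2) v(r)`. -/
noncomputable def schwarzU (n : ℕ) (m : ℝ) : ℝ → ℝ :=
  fun r => r ^ (-(((n : ℝ) - 2) / 2)) * schwarzV n m r

/-- The potential `V(r) = (m (n-1)/(2 r^n)) (2 r^(n-2)/(m + 2 r^(n-2)))^2`. -/
noncomputable def schwarzPot (n : ℕ) (m : ℝ) : ℝ → ℝ :=
  fun r => m * ((n : ℝ) - 1) / (2 * r ^ n) * (2 * r ^ (n - 2) / (m + 2 * r ^ (n - 2))) ^ 2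

/-- for `n ≥ 4`, `m > 0` and `λ` with `4λ + (n-2)(n-4) ≥ 0`, the function
`u(r) = r^(-(n-2)/2) v(r)` satisfies `u'' + ((n-2)/r) u' + (V - λ/r²) u ≤ 0` on `(0,∞)`. -/
theorem schwarzU_supersolution (n : ℕ) (hn : 4 ≤ n) (m : ℝ) (hm : 0 < m) (lam : ℝ)
    (hlam : 0 ≤ 4 * lam + ((n : ℝ) - 2) * ((n : ℝ) - 4)) (r : ℝ) (hr : 0 < r) :
    deriv (deriv (schwarzU n m)) r + (((n : ℝ) - 2) / r) * deriv (schwarzU n m) r +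
        (schwarzPot n m r - lam / r ^ 2) * schwarzU n m r ≤ 0 := by
  obtain ⟨K, rfl⟩ : ∃ K, n = K + 4 := ⟨n - 4, by omega⟩
  set c : ℝ := 1 / ((K : ℝ) + 2) with hc
  set b : ℝ := -(((K : ℝ) + 2) / 2) + 1 with hb
  have hK2 : (0:ℝ) < (K:ℝ) + 2 := by positivity
  set A : ℝ → ℝ := fun x => m + 2 * x ^ (K + 2) with hA
  have hApos : ∀ x : ℝ, 0 < x → 0 < A x := by
    intro x hx; rw [hA]; positivity
  set C : ℝ := (2:ℝ) ^ c with hC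
  set A' : ℝ → ℝ := fun x => 2 * ((K + 2 : ℕ) * x ^ (K + 1)) with hA'
  set U : ℝ → ℝ := fun x => C * (x ^ b * A x ^ (-c)) with hU
  set D1 : ℝ → ℝ := fun x =>
    C * (b * x ^ (b - 1) * A x ^ (-c) + x ^ b * (A' x * -c * A x ^ (-c - 1))) with hD1
  set D2 : ℝ → ℝ := fun x =>
    C * ((b * ((b - 1) * x ^ (b - 1 - 1)) * A x ^ (-c)
          + b * x ^ (b - 1) * (A' x * -c * A x ^ (-c - 1)))
        + (b * x ^ (b - 1) * (A' x * -c * A x ^ (-c - 1))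
          + x ^ b * ((2 * ((K + 2 : ℕ) * ((K + 1 : ℕ) * x ^ K)) * -c) * A x ^ (-c - 1)
              + A' x * -c * (A' x * (-c - 1) * A x ^ (-c - 1 - 1))))) with hD2
  -- step 1 : u = U on (0,∞)
  have hUeq : ∀ x : ℝ, 0 < x → schwarzU (K + 4) m x = U x := by
    intro x hx
    have hxp : (0:ℝ) < x ^ (K + 2) := pow_pos hx _
    have hden : (0:ℝ) < m + 2 * x ^ (K + 2) := by positivity
    have hsub : K + 4 - 2 = K + 2 := by omega
    have hcast : ((K + 4 : ℕ) : ℝ) - 2 = (K : ℝ) + 2 := by push_cast; ring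
    simp only [schwarzU, schwarzV, hsub, hcast]
    have e1 : (2 * x ^ (K + 2) / (m + 2 * x ^ (K + 2))) ^ ((1:ℝ) / ((K:ℝ) + 2))
        = (2:ℝ) ^ c * x * (m + 2 * x ^ (K + 2)) ^ (-c) := by
      rw [div_rpow (by positivity) hden.le, mul_rpow (by norm_num) hxp.le]
      have e2 : (x ^ (K + 2) : ℝ) ^ ((1:ℝ) / ((K:ℝ) + 2)) = x := by
        rw [← rpow_natCast x (K + 2), ← rpow_mul hx.le]
        push_cast
        rw [show ((K:ℝ) + 2) * (1 / ((K:ℝ) + 2)) = 1 by field_simp, rpow_one]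
      rw [e2, rpow_neg hden.le, hc]
      ring
    rw [e1, hU, hA, hC]
    have e3 : x ^ (-(((K:ℝ) + 2) / 2)) * x = x ^ b := by
      rw [hb, rpow_add hx, rpow_one]
    calc x ^ (-(((K:ℝ) + 2) / 2)) * ((2:ℝ) ^ c * x * (m + 2 * x ^ (K + 2)) ^ (-c))
        = (2:ℝ) ^ c * ((x ^ (-(((K:ℝ) + 2) / 2)) * x) * (m + 2 * x ^ (K + 2)) ^ (-c)) := by
          ring
      _ = _ := by rw [e3]
  -- derivative facts
  have hA'at : ∀ x : ℝ, HasDerivAt A (A' x) x := by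
    intro x
    have h := ((hasDerivAt_pow (K + 2) x).const_mul (2:ℝ)).const_add m
    have : K + 2 - 1 = K + 1 := by omega
    rw [this] at h
    exact h
  have hD1at : ∀ x : ℝ, 0 < x → HasDerivAt U (D1 x) x := by
    intro x hx
    have h1 : HasDerivAt (fun y : ℝ => y ^ b) (b * x ^ (b - 1)) x :=
      hasDerivAt_rpow_const (Or.inl hx.ne')
    have h2 : HasDerivAt (fun y => A y ^ (-c)) (A' x * -c * A x ^ (-c - 1)) x :=
      (hA'at x).rpow_const (Or.inl (hApos x hx).ne')
    exact (h1.mul h2).const_mul C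
  have hD2at : ∀ x : ℝ, 0 < x → HasDerivAt D1 (D2 x) x := by
    intro x hx
    have h2 : HasDerivAt (fun y => A y ^ (-c)) (A' x * -c * A x ^ (-c - 1)) x :=
      (hA'at x).rpow_const (Or.inl (hApos x hx).ne')
    have hP : HasDerivAt (fun y : ℝ => b * y ^ (b - 1) * A y ^ (-c))
        (b * ((b - 1) * x ^ (b - 1 - 1)) * A x ^ (-c)
          + b * x ^ (b - 1) * (A' x * -c * A x ^ (-c - 1))) x :=
      ((hasDerivAt_rpow_const (Or.inl hx.ne')).const_mul b).mul h2
    have h1 : HasDerivAt (fun y : ℝ => y ^ b) (b * x ^ (b - 1)) x :=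
      hasDerivAt_rpow_const (Or.inl hx.ne')
    have hA'c : HasDerivAt (fun y => A' y * -c)
        (2 * ((K + 2 : ℕ) * ((K + 1 : ℕ) * x ^ K)) * -c) x := by
      have h := (((hasDerivAt_pow (K + 1) x).const_mul ((K + 2 : ℕ) : ℝ)).const_mul
        (2:ℝ)).mul_const (-c)
      have : K + 1 - 1 = K := by omega
      rw [this] at h
      exact h
    have hAc1 : HasDerivAt (fun y => A y ^ (-c - 1))
        (A' x * (-c - 1) * A x ^ (-c - 1 - 1)) x :=
      (hA'at x).rpow_const (Or.inl (hApos x hx).ne')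
    have hQ : HasDerivAt (fun y : ℝ => y ^ b * (A' y * -c * A y ^ (-c - 1)))
        (b * x ^ (b - 1) * (A' x * -c * A x ^ (-c - 1))
          + x ^ b * ((2 * ((K + 2 : ℕ) * ((K + 1 : ℕ) * x ^ K)) * -c) * A x ^ (-c - 1)
              + A' x * -c * (A' x * (-c - 1) * A x ^ (-c - 1 - 1)))) x :=
      h1.mul (hA'c.mul hAc1)
    exact (hP.add hQ).const_mul C
  -- first derivative of u on (0,∞)
  have hderiv1 : ∀ x : ℝ, 0 < x → deriv (schwarzU (K + 4) m) x = D1 x := by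
    intro x hx
    have hev : schwarzU (K + 4) m =ᶠ[nhds x] U :=
      Filter.eventually_of_mem (Ioi_mem_nhds hx) fun y hy => hUeq y hy
    rw [hev.deriv_eq, (hD1at x hx).deriv]
  have hderiv2 : deriv (deriv (schwarzU (K + 4) m)) r = D2 r := by
    have hev : deriv (schwarzU (K + 4) m) =ᶠ[nhds r] D1 :=
      Filter.eventually_of_mem (Ioi_mem_nhds hr) fun y hy => hderiv1 y hy
    rw [hev.deriv_eq, (hD2at r hr).deriv]
  rw [hderiv2, hderiv1 r hr, hUeq r hr]
  -- algebra
  have hA0 : (0:ℝ) < A r := hApos r hr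
  have hAne : m + 2 * r ^ (K + 2) ≠ 0 := by positivity
  have hXpos : (0:ℝ) < r ^ b := rpow_pos_of_pos hr b
  have hYpos : (0:ℝ) < A r ^ (-c) := rpow_pos_of_pos hA0 _
  have hCpos : (0:ℝ) < C := rpow_pos_of_pos two_pos c
  have e1 : r ^ (b - 1) = r ^ b / r := by rw [rpow_sub hr, rpow_one]
  have e2 : r ^ (b - 1 - 1) = r ^ b / r / r := by
    rw [rpow_sub hr, rpow_sub hr, rpow_one]
  have e3 : A r ^ (-c - 1) = A r ^ (-c) / A r := by rw [rpow_sub hA0, rpow_one]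
  have e4 : A r ^ (-c - 1 - 1) = A r ^ (-c) / A r / A r := by
    rw [rpow_sub hA0, rpow_sub hA0, rpow_one]
  have hsub : K + 4 - 2 = K + 2 := by omega
  have key : D2 r + (((K + 4 : ℕ) : ℝ) - 2) / r * D1 r
      + (schwarzPot (K + 4) m r - lam / r ^ 2) * U r
      = -((4 * lam + (((K:ℝ) + 4) - 2) * (((K:ℝ) + 4) - 4)) / (4 * r ^ 2)) * U r := by
    simp only [hD2, hD1, hU, hA', hA, schwarzPot, hsub]
    rw [e1, e2, e3, e4, hb, hc]
    push_cast
    field_simp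
    ring
  rw [key]
  have hS : (0:ℝ) ≤ 4 * lam + (((K:ℝ) + 4) - 2) * (((K:ℝ) + 4) - 4) := by
    push_cast at hlam; linarith
  have hUpos : (0:ℝ) < U r := by
    rw [hU]; exact mul_pos hCpos (mul_pos hXpos hYpos)
  have : (0:ℝ) ≤ (4 * lam + (((K:ℝ) + 4) - 2) * (((K:ℝ) + 4) - 4)) / (4 * r ^ 2) :=
    div_nonneg hS (by positivity)
  nlinarith [hUpos, this]
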